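/- arXiv:1405.5491 — 7 statements merged into one kernel-verified Lean document; each statement's English description precedes it below -/
import Mathlib

section
/- Let G be a group and M a submonoid of G such that every element of G can be written as m·n⁻¹ with m, n ∈ M. Then for every group H and every monoid homomorphism φ : M → H there exists a unique group homomorphism φ̃ : G → H whose restriction to M equals φ, and it satisfies φ̃(m·n⁻¹) = φ(m)·φ(n)⁻¹ for all m, n ∈ M. -/
/-- If `M` is a submonoid of a group `G` such that every element of `G`
can be written as `m * n⁻¹` with `m, n ∈ M`, then every monoid homomorphism `φ : M → H`
into a group `H` extends uniquely to a group homomorphism `G → H`, and the extension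
satisfies the fraction formula. -/
theorem monoidHom_extends_uniquely_of_fractions
    {G : Type*} [Group G] (M : Submonoid G)
    (hfrac : ∀ g : G, ∃ m n : M, g = (m : G) * (n : G)⁻¹)
    {H : Type*} [Group H] (φ : M →* H) :
    ∃! ψ : G →* H, (∀ m : M, ψ (m : G) = φ m) ∧
      ∀ m n : M, ψ ((m : G) * (n : G)⁻¹) = φ m * (φ n)⁻¹ := by
  classical
  have hfr := hfrac
  choose num den hrep using hfr
  set f : G → H := fun g => φ (num g) * (φ (den g))⁻¹ with hf
  -- well-definedness: the value only depends on g, not on the representation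
  have key : ∀ (m n : M) (g : G), g = (m : G) * (n : G)⁻¹ → f g = φ m * (φ n)⁻¹ := by
    intro m n g hg
    -- num g * (den g)⁻¹ = m * n⁻¹
    have heq : (num g : G) * (den g : G)⁻¹ = (m : G) * (n : G)⁻¹ := by
      rw [← hrep g, hg]
    -- Ore: find a b with n⁻¹ * den g = a * b⁻¹
    obtain ⟨a, b, hab⟩ := hfrac ((n : G)⁻¹ * (den g : G))
    have hd : (den g : G) = (n : G) * ((a : G) * (b : G)⁻¹) := by
      rw [← hab]; group
    have h1 : (den g : G) * (b : G) = (n : G) * (a : G) := by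
      rw [hd]; group
    have h2 : (num g : G) * (b : G) = (m : G) * (a : G) := by
      have hnum : (num g : G) = (m : G) * (n : G)⁻¹ * (den g : G) := by
        rw [← heq]; group
      rw [hnum, hd]; group
    have h1' : den g * b = n * a := Subtype.ext h1
    have h2' : num g * b = m * a := Subtype.ext h2
    have p1 : φ (den g) * φ b = φ n * φ a := by rw [← map_mul, ← map_mul, h1']
    have p2 : φ (num g) * φ b = φ m * φ a := by rw [← map_mul, ← map_mul, h2']
    have : φ (num g) * (φ (den g))⁻¹ =
        (φ (num g) * φ b) * (φ (den g) * φ b)⁻¹ := by group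
    rw [hf]
    simp only []
    rw [this, p1, p2]
    group
  have fval : ∀ g : G, f g = φ (num g) * (φ (den g))⁻¹ := fun g => rfl
  have fmul : ∀ g g' : G, f (g * g') = f g * f g' := by
    intro g g'
    obtain ⟨a, b, hab⟩ := hfrac ((den g : G)⁻¹ * (num g' : G))
    -- num g' * b = den g * a
    have h1 : (num g' : G) * (b : G) = (den g : G) * (a : G) := by
      have hnum : (num g' : G) = (den g : G) * ((a : G) * (b : G)⁻¹) := by
        rw [← hab]; group
      rw [hnum]; group
    have h1' : num g' * b = den g * a := Subtype.ext h1
    have hggrep : g * g' = ((num g * a : M) : G) * ((den g' * b : M) : G)⁻¹ := by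
      push_cast
      calc g * g' = ((num g : G) * (den g : G)⁻¹) * ((num g' : G) * (den g' : G)⁻¹) := by
            rw [← hrep g, ← hrep g']
        _ = (num g : G) * ((den g : G)⁻¹ * (num g' : G)) * (den g' : G)⁻¹ := by group
        _ = (num g : G) * ((a : G) * (b : G)⁻¹) * (den g' : G)⁻¹ := by rw [hab]
        _ = (num g : G) * (a : G) * ((den g' : G) * (b : G))⁻¹ := by group
    rw [key _ _ _ hggrep, fval, fval]
    have p1 : φ (num g') * φ b = φ (den g) * φ a := by rw [← map_mul, ← map_mul, h1']
    rw [map_mul, map_mul]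
    calc φ (num g) * φ a * (φ (den g') * φ b)⁻¹
        = φ (num g) * (φ a * (φ b)⁻¹) * (φ (den g'))⁻¹ := by group
      _ = φ (num g) * ((φ (den g))⁻¹ * φ (num g')) * (φ (den g'))⁻¹ := by
          congr 1
          congr 1
          have : φ a = (φ (den g))⁻¹ * (φ (num g') * φ b) := by rw [p1]; group
          rw [this]; group
      _ = _ := by group
  have fone : f 1 = 1 := by
    have h1 : (1 : G) = ((1 : M) : G) * ((1 : M) : G)⁻¹ := by simp
    rw [key 1 1 1 h1, map_one]; group
  let ψ : G →* H := { toFun := f, map_one' := fone, map_mul' := fmul }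
  have hψm : ∀ m : M, ψ (m : G) = φ m := by
    intro m
    have h1 : (m : G) = (m : G) * ((1 : M) : G)⁻¹ := by simp
    show f (m : G) = φ m
    rw [key m 1 m h1, map_one]; group
  have hψfrac : ∀ m n : M, ψ ((m : G) * (n : G)⁻¹) = φ m * (φ n)⁻¹ := by
    intro m n
    exact key m n _ rfl
  refine ⟨ψ, ⟨hψm, hψfrac⟩, ?_⟩
  rintro χ ⟨hχm, -⟩
  ext g
  obtain ⟨m, n, hg⟩ := hfrac g
  rw [hg, map_mul, map_inv, hχm, hχm, map_mul, map_inv, hψm, hψm]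
end

section
/- In the forest monoid 𝓕, every element can be expressed as a product λ_{k_1}·λ_{k_2}⋯λ_{k_r} with k_1 ≤ k_2 ≤ ⋯ ≤ k_r (with r ≥ 0, the empty product being the identity), and the weakly increasing index sequence (k_1, …, k_r) representing a given element is unique. -/
/-!
Moving `λ_k` rightwards past each `λ_a` with `a < k` by the relation `λ_k λ_a = λ_a λ_{k+1}`
inserts it into a weakly increasing word, keeping the word weakly increasing. These shifted
insertions satisfy the defining relations of `𝓕`, so they form an action of `𝓕` on lists of
indices. Folding the insertions over any word sorts it without changing its value in `𝓕`
(existence), and a weakly increasing list is the image of the empty list under the element it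
represents (uniqueness).
-/

/-- The defining relation of the forest monoid: `λ_j * λ_i = λ_i * λ_{j+1}` for `i < j`. -/
def ForestRel : FreeMonoid ℕ+ → FreeMonoid ℕ+ → Prop := fun a b =>
  ∃ i j : ℕ+, i < j ∧ a = FreeMonoid.of j * FreeMonoid.of i ∧
    b = FreeMonoid.of i * FreeMonoid.of (j + 1)

/-- The congruence generated by the forest relations. -/
def ForestCon : Con (FreeMonoid ℕ+) := conGen ForestRel

/-- The forest monoid `𝓕`. -/
abbrev ForestMonoid := ForestCon.Quotient

/-- The generator `λ_k` of the forest monoid. -/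
def lam (k : ℕ+) : ForestMonoid := ForestCon.mk' (FreeMonoid.of k)

/-- The product `λ_{k_1} ⋯ λ_{k_r}` associated to a list of indices. -/
def lamProd (l : List ℕ+) : ForestMonoid := (l.map lam).prod

namespace ForestMonoid

lemma lam_mul_lam {i j : ℕ+} (hij : i < j) : lam j * lam i = lam i * lam (j + 1) :=
  ForestCon.eq.2 <| ConGen.Rel.of _ _ ⟨i, j, hij, rfl, rfl⟩

@[simp]
lemma lamProd_nil : lamProd [] = 1 := rfl

@[simp]
lemma lamProd_cons (a : ℕ+) (l : List ℕ+) : lamProd (a :: l) = lam a * lamProd l := by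
  simp [lamProd]

lemma lamProd_surjective : Function.Surjective lamProd := by
  intro x
  obtain ⟨w, rfl⟩ := ForestCon.mk'_surjective x
  have lift_lam : FreeMonoid.lift lam = ForestCon.mk' := FreeMonoid.hom_eq fun _ => rfl
  exact ⟨w.toList, by rw [lamProd, ← FreeMonoid.lift_ofList, lift_lam, FreeMonoid.ofList_toList]⟩

def shiftInsert (k : ℕ+) : List ℕ+ → List ℕ+
  | [] => [k]
  | a :: l => if a < k then a :: shiftInsert (k + 1) l else k :: a :: l

lemma shiftInsert_of_forall_le {k : ℕ+} {l : List ℕ+} (h : ∀ b ∈ l, k ≤ b) :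
    shiftInsert k l = k :: l := by
  cases l with
  | nil => rfl
  | cons a l => simp [shiftInsert, not_lt.2 (h a List.mem_cons_self)]

lemma le_of_mem_shiftInsert {k b : ℕ+} {l : List ℕ+} (hb : b ∈ shiftInsert k l) (hbl : b ∉ l) :
    k ≤ b := by
  induction l generalizing k with
  | nil => simp_all [shiftInsert]
  | cons a l ih =>
    by_cases hak : a < k
    · simp only [shiftInsert, if_pos hak, List.mem_cons] at hb hbl
      rcases hb with rfl | hb
      · exact absurd (Or.inl rfl) hbl
      · exact (PNat.lt_add_right k 1).le.trans (ih hb fun h => hbl (Or.inr h))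
    · simp only [shiftInsert, if_neg hak, List.mem_cons] at hb hbl
      rcases hb with rfl | hb
      · exact le_rfl
      · exact absurd hb hbl

lemma pairwise_shiftInsert {k : ℕ+} {l : List ℕ+} (hl : l.Pairwise (· ≤ ·)) :
    (shiftInsert k l).Pairwise (· ≤ ·) := by
  induction l generalizing k with
  | nil => simp [shiftInsert]
  | cons a l ih =>
    obtain ⟨ha, hl⟩ := List.pairwise_cons.1 hl
    by_cases hak : a < k
    · rw [shiftInsert, if_pos hak]
      refine List.pairwise_cons.2 ⟨fun b hb => ?_, ih hl⟩
      by_cases hbl : b ∈ l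
      · exact ha b hbl
      · exact hak.le.trans <| (PNat.lt_add_right k 1).le.trans (le_of_mem_shiftInsert hb hbl)
    · have hka : k ≤ a := not_lt.1 hak
      rw [shiftInsert, if_neg hak]
      refine (hl.cons ha).cons fun b hb => ?_
      rcases List.mem_cons.1 hb with rfl | hb
      exacts [hka, hka.trans (ha b hb)]

lemma shiftInsert_shiftInsert {i j : ℕ+} (hij : i < j) (l : List ℕ+) :
    shiftInsert j (shiftInsert i l) = shiftInsert i (shiftInsert (j + 1) l) := by
  induction l generalizing i j with
  | nil =>
    simp [shiftInsert, hij, not_lt.2 (hij.trans (PNat.lt_add_right j 1)).le]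
  | cons a l ih =>
    have hij' : i < j + 1 := hij.trans (PNat.lt_add_right j 1)
    by_cases hai : a < i
    · have haj : a < j := hai.trans hij
      simp only [shiftInsert, if_pos hai, if_pos haj, if_pos (haj.trans (PNat.lt_add_right j 1))]
      rw [ih ((add_lt_add_iff_right 1).2 hij)]
    · by_cases haj : a < j + 1
      · simp only [shiftInsert, if_neg hai, if_pos hij, if_pos haj]
      · simp only [shiftInsert, if_neg hai, if_pos hij, if_neg haj, if_neg (not_lt.2 hij'.le)]

lemma lamProd_shiftInsert (k : ℕ+) (l : List ℕ+) :
    lamProd (shiftInsert k l) = lam k * lamProd l := by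
  induction l generalizing k with
  | nil => simp [shiftInsert]
  | cons a l ih =>
    by_cases hak : a < k
    · rw [shiftInsert, if_pos hak, lamProd_cons, ih, lamProd_cons, ← mul_assoc, ← mul_assoc,
        lam_mul_lam hak]
    · rw [shiftInsert, if_neg hak, lamProd_cons]

def shiftAction : ForestMonoid →* Function.End (List ℕ+) :=
  ForestCon.lift (FreeMonoid.lift shiftInsert) <| Con.conGen_le.2 <| by
    rintro _ _ ⟨i, j, hij, rfl, rfl⟩
    funext l
    exact shiftInsert_shiftInsert hij l

lemma shiftAction_lamProd (l m : List ℕ+) :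
    shiftAction (lamProd l) m = l.foldr shiftInsert m := by
  induction l with
  | nil => rfl
  | cons a l ih =>
    rw [lamProd_cons, map_mul]
    exact congrArg (shiftInsert a) ih

lemma lamProd_foldr_shiftInsert (l m : List ℕ+) :
    lamProd (l.foldr shiftInsert m) = lamProd l * lamProd m := by
  induction l with
  | nil => simp
  | cons a l ih => rw [List.foldr_cons, lamProd_shiftInsert, ih, lamProd_cons, mul_assoc]

lemma pairwise_foldr_shiftInsert (l : List ℕ+) {m : List ℕ+} (hm : m.Pairwise (· ≤ ·)) :
    (l.foldr shiftInsert m).Pairwise (· ≤ ·) := by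
  induction l with
  | nil => exact hm
  | cons a l ih => exact pairwise_shiftInsert ih

lemma foldr_shiftInsert_nil_of_pairwise {l : List ℕ+} (hl : l.Pairwise (· ≤ ·)) :
    l.foldr shiftInsert [] = l := by
  induction l with
  | nil => rfl
  | cons a l ih =>
    obtain ⟨ha, hl⟩ := List.pairwise_cons.1 hl
    rw [List.foldr_cons, ih hl, shiftInsert_of_forall_le ha]

end ForestMonoid

open ForestMonoid in
/-- every element of the forest monoid is represented by a unique weakly
increasing sequence of indices. -/
theorem forestMonoid_normal_form (x : ForestMonoid) :
    ∃! l : List ℕ+, List.Pairwise (· ≤ ·) l ∧ lamProd l = x := by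
  obtain ⟨l, rfl⟩ := lamProd_surjective x
  refine ⟨l.foldr shiftInsert [],
    ⟨pairwise_foldr_shiftInsert l .nil, by rw [lamProd_foldr_shiftInsert, lamProd_nil, mul_one]⟩, ?_⟩
  rintro l' ⟨hl', hprod⟩
  rw [← foldr_shiftInsert_nil_of_pairwise hl', ← shiftAction_lamProd, hprod, shiftAction_lamProd]
end

section
/- The forest monoid 𝓕 is cancellative: for all a, b, c ∈ 𝓕, a·b = a·c implies b = c, and b·a = c·a implies b = c. -/
/-!
The generators act on words by `insertLeft`, which satisfies the forest relations, so `𝓕` acts on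
words. Letting `a` act on the empty word gives a nondecreasing word, the normal form of `a`, which
spells `a` again; so `a` is determined by its normal form. Left and right multiplication by `λ_x`
act on normal forms by `insertLeft x` and `insertRight x`, both injective, so every generator, and
hence every element, is left and right cancellable.
-/

namespace ForestMonoid

/-- For a nondecreasing word `s`, `insertLeft x s` is the normal form of `λ_x · s`: `λ_x` moves
right past every smaller letter `λ_b`, becoming `λ_{x+1}` (`λ_x λ_b = λ_b λ_{x+1}`). -/
def insertLeft : ℕ+ → List ℕ+ → List ℕ+
  | x, [] => [x]
  | x, b :: t => if b < x then b :: insertLeft (x + 1) t else x :: b :: t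

/-- For a nondecreasing word `s`, `insertRight x s` is the normal form of `s · λ_x`: each letter
`λ_a` of `s` with `x < a` moves right past `λ_x`, becoming `λ_{a+1}`. -/
def insertRight (x : ℕ+) : List ℕ+ → List ℕ+
  | [] => [x]
  | a :: s => if a ≤ x then a :: insertRight x s else x :: (a :: s).map (· + 1)

theorem insertLeft_ne_nil (x : ℕ+) (s : List ℕ+) : insertLeft x s ≠ [] := by
  cases s with
  | nil => simp [insertLeft]
  | cons b t => unfold insertLeft; split_ifs <;> simp

theorem insertLeft_of_forall_le {x : ℕ+} {s : List ℕ+} (h : ∀ z ∈ s, x ≤ z) :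
    insertLeft x s = x :: s := by
  cases s with
  | nil => rfl
  | cons b t => simp [insertLeft, not_lt.2 (h b List.mem_cons_self)]

theorem insertLeft_insertLeft_of_lt (s : List ℕ+) {i j : ℕ+} (h : i < j) :
    insertLeft j (insertLeft i s) = insertLeft i (insertLeft (j + 1) s) := by
  induction s generalizing i j with
  | nil => simp [insertLeft, h, (h.trans (PNat.lt_add_right j 1)).not_gt]
  | cons b t ih =>
    have hj : j < j + 1 := PNat.lt_add_right j 1
    by_cases hbi : b < i
    · simp only [insertLeft, if_pos hbi, if_pos (hbi.trans h), if_pos (hbi.trans (h.trans hj))]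
      exact congrArg _ (ih (add_lt_add_of_lt_of_le h le_rfl))
    · by_cases hbj : b < j + 1
      · simp [insertLeft, hbi, h, hbj]
      · simp [insertLeft, hbi, h, hbj, (h.trans hj).not_gt]

theorem insertLeft_injective (x : ℕ+) : Function.Injective (insertLeft x) := by
  intro s t hst
  induction s generalizing x t with
  | nil =>
    cases t with
    | nil => rfl
    | cons b t =>
      simp only [insertLeft] at hst
      split_ifs at hst <;> simp_all [insertLeft_ne_nil]
  | cons a s ih =>
    cases t with
    | nil =>
      simp only [insertLeft] at hst
      split_ifs at hst <;> simp_all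
    | cons b t =>
      simp only [insertLeft] at hst
      split_ifs at hst with ha hb hb <;> simp only [List.cons.injEq] at hst
      · exact congrArg₂ _ hst.1 (ih _ hst.2)
      · exact absurd (hst.1 ▸ ha) (lt_irrefl x)
      · exact absurd (hst.1 ▸ hb) (lt_irrefl x)
      · exact congrArg₂ _ hst.2.1 hst.2.2

theorem le_of_mem_insertLeft {a x : ℕ+} {s : List ℕ+} (hx : a ≤ x) (hs : ∀ w ∈ s, a ≤ w) :
    ∀ z ∈ insertLeft x s, a ≤ z := by
  induction s generalizing x with
  | nil => simpa [insertLeft] using hx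
  | cons b t ih =>
    simp only [List.forall_mem_cons] at hs
    unfold insertLeft
    split_ifs
    · exact List.forall_mem_cons.2 ⟨hs.1, ih (hx.trans (PNat.lt_add_right x 1).le) hs.2⟩
    · exact List.forall_mem_cons.2 ⟨hx, List.forall_mem_cons.2 hs⟩

theorem pairwise_insertLeft (x : ℕ+) {s : List ℕ+} (hs : s.Pairwise (· ≤ ·)) :
    (insertLeft x s).Pairwise (· ≤ ·) := by
  induction s generalizing x with
  | nil => simp [insertLeft]
  | cons b t ih =>
    obtain ⟨hb, ht⟩ := List.pairwise_cons.1 hs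
    unfold insertLeft
    split_ifs with hbx
    · exact List.pairwise_cons.2
        ⟨le_of_mem_insertLeft (hbx.trans (PNat.lt_add_right x 1)).le hb, ih (x + 1) ht⟩
    · exact List.pairwise_cons.2 ⟨List.forall_mem_cons.2 ⟨not_lt.1 hbx,
        fun z hz => (not_lt.1 hbx).trans (hb z hz)⟩, hs⟩

theorem le_of_mem_insertRight {a x : ℕ+} {s : List ℕ+} (hx : a ≤ x) (hs : ∀ w ∈ s, a ≤ w) :
    ∀ z ∈ insertRight x s, a ≤ z := by
  induction s with
  | nil => simpa [insertRight] using hx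
  | cons b t ih =>
    simp only [List.forall_mem_cons] at hs
    unfold insertRight
    split_ifs
    · exact List.forall_mem_cons.2 ⟨hs.1, ih hs.2⟩
    · simp only [List.map_cons, List.forall_mem_cons, List.forall_mem_map]
      exact ⟨hx, (hs.1.trans (PNat.lt_add_right b 1).le),
        fun w hw => (hs.2 w hw).trans (PNat.lt_add_right w 1).le⟩

theorem insertRight_of_forall_lt {x : ℕ+} {s : List ℕ+} (h : ∀ w ∈ s, x < w) :
    insertRight x s = x :: s.map (· + 1) := by
  cases s with
  | nil => rfl
  | cons b t => simp [insertRight, not_le.2 (h b List.mem_cons_self)]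

theorem foldr_insertLeft_singleton (x : ℕ+) {s : List ℕ+} (hs : s.Pairwise (· ≤ ·)) :
    s.foldr insertLeft [x] = insertRight x s := by
  induction s with
  | nil => rfl
  | cons a t ih =>
    obtain ⟨ha, ht⟩ := List.pairwise_cons.1 hs
    rw [List.foldr_cons, ih ht]
    by_cases hax : a ≤ x
    · rw [insertRight, if_pos hax]
      exact insertLeft_of_forall_le (le_of_mem_insertRight hax ha)
    · have hxt : ∀ w ∈ t, x < w := fun w hw => (not_le.1 hax).trans_le (ha w hw)
      rw [insertRight_of_forall_lt hxt, insertRight_of_forall_lt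
        (List.forall_mem_cons.2 ⟨not_le.1 hax, hxt⟩), insertLeft, if_pos (not_le.1 hax),
        insertLeft_of_forall_le, List.map_cons]
      simpa using ha

theorem exists_insertRight_eq_cons (x : ℕ+) (s : List ℕ+) :
    ∃ h r, insertRight x s = h :: r ∧ h ≤ x := by
  cases s with
  | nil => exact ⟨x, [], rfl, le_rfl⟩
  | cons a t =>
    unfold insertRight
    split_ifs with hax
    · exact ⟨a, _, rfl, hax⟩
    · exact ⟨x, _, rfl, le_rfl⟩

theorem insertRight_injective (x : ℕ+) : Function.Injective (insertRight x) := by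
  intro s t hst
  induction s generalizing t with
  | nil =>
    cases t with
    | nil => rfl
    | cons b t =>
      obtain ⟨h, r, hr, -⟩ := exists_insertRight_eq_cons x t
      simp only [insertRight] at hst
      split_ifs at hst <;> simp_all
  | cons a s ih =>
    cases t with
    | nil =>
      obtain ⟨h, r, hr, -⟩ := exists_insertRight_eq_cons x s
      simp only [insertRight] at hst
      split_ifs at hst <;> simp_all
    | cons b t =>
      obtain ⟨h, r, hr, hh⟩ := exists_insertRight_eq_cons x s
      obtain ⟨h', r', hr', hh'⟩ := exists_insertRight_eq_cons x t
      simp only [insertRight] at hst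
      split_ifs at hst with ha hb hb
      · simp only [List.cons.injEq] at hst
        exact congrArg₂ _ hst.1 (ih hst.2)
      · rw [hr, List.map_cons, List.cons.injEq, List.cons.injEq] at hst
        exact absurd ((PNat.lt_add_right b 1).le.trans (hst.2.1 ▸ hh)) hb
      · rw [hr', List.map_cons, List.cons.injEq, List.cons.injEq] at hst
        exact absurd ((PNat.lt_add_right a 1).le.trans (hst.2.1 ▸ hh')) ha
      · simp only [List.cons.injEq] at hst
        exact List.map_injective_iff.2 (add_left_injective 1) hst.2

theorem lam_mul_lam_of_lt {i j : ℕ+} (h : i < j) : lam j * lam i = lam i * lam (j + 1) :=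
  ForestCon.eq.2 <| ConGen.Rel.of _ _ ⟨i, j, h, rfl, rfl⟩

def ofWord (s : List ℕ+) : ForestMonoid := ForestCon.mk' (FreeMonoid.ofList s)

theorem ofWord_nil : ofWord [] = 1 := rfl

theorem ofWord_cons (x : ℕ+) (s : List ℕ+) : ofWord (x :: s) = lam x * ofWord s := rfl

theorem ofWord_surjective : Function.Surjective ofWord :=
  ForestCon.mk'_surjective.comp FreeMonoid.ofList.surjective

theorem ofWord_insertLeft (x : ℕ+) (s : List ℕ+) : ofWord (insertLeft x s) = lam x * ofWord s := by
  induction s generalizing x with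
  | nil => rfl
  | cons b t ih =>
    unfold insertLeft
    split_ifs with hbx
    · rw [ofWord_cons, ih, ofWord_cons, ← mul_assoc, ← mul_assoc, lam_mul_lam_of_lt hbx]
    · rfl

theorem ofWord_foldr_insertLeft (s t : List ℕ+) :
    ofWord (s.foldr insertLeft t) = ofWord s * ofWord t := by
  induction s with
  | nil => exact (one_mul _).symm
  | cons x s ih => rw [List.foldr_cons, ofWord_insertLeft, ih, ofWord_cons, mul_assoc]

def act : ForestMonoid →* Function.End (List ℕ+) :=
  ForestCon.lift (FreeMonoid.lift insertLeft) <| Con.conGen_le.2 <| by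
    rintro _ _ ⟨i, j, hij, rfl, rfl⟩
    exact funext fun s => insertLeft_insertLeft_of_lt s hij

theorem act_lam (x : ℕ+) (s : List ℕ+) : act (lam x) s = insertLeft x s := rfl

theorem act_mul_apply (a b : ForestMonoid) (s : List ℕ+) : act (a * b) s = act a (act b s) := by
  rw [map_mul]
  rfl

theorem act_ofWord (s t : List ℕ+) : act (ofWord s) t = s.foldr insertLeft t := by
  induction s with
  | nil => rfl
  | cons x s ih => rw [ofWord_cons, act_mul_apply, ih, act_lam, List.foldr_cons]

def normalForm (a : ForestMonoid) : List ℕ+ := act a []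

theorem ofWord_normalForm (a : ForestMonoid) : ofWord (normalForm a) = a := by
  obtain ⟨s, rfl⟩ := ofWord_surjective a
  rw [normalForm, act_ofWord, ofWord_foldr_insertLeft, ofWord_nil, mul_one]

theorem act_eq_foldr_normalForm (a : ForestMonoid) (t : List ℕ+) :
    act a t = (normalForm a).foldr insertLeft t := by
  conv_lhs => rw [← ofWord_normalForm a]
  exact act_ofWord _ _

theorem normalForm_injective : Function.Injective normalForm :=
  Function.LeftInverse.injective ofWord_normalForm

theorem pairwise_normalForm (a : ForestMonoid) : (normalForm a).Pairwise (· ≤ ·) := by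
  obtain ⟨s, rfl⟩ := ofWord_surjective a
  rw [normalForm, act_ofWord]
  induction s with
  | nil => exact List.Pairwise.nil
  | cons x s ih => exact pairwise_insertLeft x ih

theorem normalForm_lam_mul (x : ℕ+) (a : ForestMonoid) :
    normalForm (lam x * a) = insertLeft x (normalForm a) := by
  rw [normalForm, act_mul_apply, act_lam, normalForm]

theorem normalForm_mul_lam (a : ForestMonoid) (x : ℕ+) :
    normalForm (a * lam x) = insertRight x (normalForm a) := by
  rw [normalForm, act_mul_apply, act_lam, insertLeft, act_eq_foldr_normalForm,
    foldr_insertLeft_singleton x (pairwise_normalForm a)]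

theorem isLeftRegular_lam (x : ℕ+) : IsLeftRegular (lam x) := fun a b h =>
  normalForm_injective <| insertLeft_injective x <| by
    rw [← normalForm_lam_mul, ← normalForm_lam_mul]
    exact congrArg normalForm h

theorem isRightRegular_lam (x : ℕ+) : IsRightRegular (lam x) := fun a b h =>
  normalForm_injective <| insertRight_injective x <| by
    rw [← normalForm_mul_lam, ← normalForm_mul_lam]
    exact congrArg normalForm h

instance : IsLeftCancelMul ForestMonoid where
  mul_left_cancel a := by
    obtain ⟨s, rfl⟩ := ofWord_surjective a
    induction s with
    | nil => exact isRegular_one.left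
    | cons x s ih => exact (isLeftRegular_lam x).mul ih

instance : IsRightCancelMul ForestMonoid where
  mul_right_cancel a := by
    obtain ⟨s, rfl⟩ := ofWord_surjective a
    induction s with
    | nil => exact isRegular_one.right
    | cons x s ih => exact (isRightRegular_lam x).mul ih

end ForestMonoid

/-- the forest monoid is cancellative. -/
theorem forestMonoid_cancellative :
    (∀ a b c : ForestMonoid, a * b = a * c → b = c) ∧
    (∀ a b c : ForestMonoid, b * a = c * a → b = c) :=
  ⟨fun _ _ _ => mul_left_cancel, fun _ _ _ => mul_right_cancel⟩
end

section
/- Let R be a ring, n ≥ 2, 1 ≤ k ≤ n, and let A be an upper triangular n×n matrix over R. If the last row and last column of κ_k(A) agree with those of the identity matrix (i.e. (κ_k A)_{i,n+1} = 0 for i ≤ n, (κ_k A)_{n+1,n+1} = 1, and (κ_k A)_{n+1,j} = 0 for j ≤ n), then the last row and last column of A agree with those of the identity matrix; that is, A is the block diagonal matrix diag(C, 1) for some upper triangular (n−1)×(n−1) matrix C. (This is the properly-graded property of the matrix cloning system.) -/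
/-- The index map `π_k` (0-indexed): `m ↦ m` for `m ≤ k`, `m ↦ m - 1` for `m > k`. -/
def cloneIdx {n : ℕ} (k : Fin n) (m : Fin (n + 1)) : Fin n :=
  if h : (m : ℕ) ≤ (k : ℕ) then ⟨(m : ℕ), lt_of_le_of_lt h k.isLt⟩
  else ⟨(m : ℕ) - 1, by have hm := m.isLt; have hk := k.isLt; omega⟩

/-- The `k`-th matrix cloning map `κ_k : M_n(R) → M_{n+1}(R)` (0-indexed): the entry
`(κ_k A)_{i,j}` is `0` if (`i = k` and `j > k`) or (`i = k+1` and `j ≤ k`), and is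
`A_{π_k(i), π_k(j)}` otherwise. -/
def mclone {R : Type*} [Zero R] {n : ℕ} (k : Fin n)
    (A : Matrix (Fin n) (Fin n) R) : Matrix (Fin (n + 1)) (Fin (n + 1)) R :=
  Matrix.of fun i j =>
    if ((i : ℕ) = (k : ℕ) ∧ (k : ℕ) < (j : ℕ)) ∨
       ((i : ℕ) = (k : ℕ) + 1 ∧ (j : ℕ) ≤ (k : ℕ)) then 0
    else A (cloneIdx k i) (cloneIdx k j)

lemma mclone_eval {R : Type*} [Zero R] {n : ℕ} (k : Fin n)
    (A : Matrix (Fin n) (Fin n) R) (i j : Fin (n + 1))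
    (h1 : ¬(((i : ℕ) = (k : ℕ) ∧ (k : ℕ) < (j : ℕ)) ∨
       ((i : ℕ) = (k : ℕ) + 1 ∧ (j : ℕ) ≤ (k : ℕ)))) (i' j' : Fin n)
    (hi : (i' : ℕ) = if (i : ℕ) ≤ (k : ℕ) then (i : ℕ) else (i : ℕ) - 1)
    (hj : (j' : ℕ) = if (j : ℕ) ≤ (k : ℕ) then (j : ℕ) else (j : ℕ) - 1) :
    mclone k A i j = A i' j' := by
  simp only [mclone, Matrix.of_apply, if_neg h1]
  congr 1
  · apply Fin.ext; simp only [cloneIdx]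
    split_ifs at hi ⊢ <;> simp only [Fin.val_mk] <;> omega
  · apply Fin.ext; simp only [cloneIdx]
    split_ifs at hj ⊢ <;> simp only [Fin.val_mk] <;> omega

/-- properly graded: let `A` be an upper triangular matrix of size
`n + 2 ≥ 2`. If the last row and column of `κ_k A` agree with those of the identity
matrix, then the last row and column of `A` agree with those of the identity matrix,
i.e. `A = diag(C, 1)` for some upper triangular matrix `C` of one size smaller. -/
theorem mclone_properly_graded {R : Type*} [Ring R] {n : ℕ} (k : Fin (n + 2))
    (A : Matrix (Fin (n + 2)) (Fin (n + 2)) R)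
    (htri : ∀ i j : Fin (n + 2), j < i → A i j = 0)
    (hcol : ∀ i : Fin (n + 3), i ≠ Fin.last (n + 2) → mclone k A i (Fin.last (n + 2)) = 0)
    (hdiag : mclone k A (Fin.last (n + 2)) (Fin.last (n + 2)) = 1)
    (hrow : ∀ j : Fin (n + 3), j ≠ Fin.last (n + 2) → mclone k A (Fin.last (n + 2)) j = 0) :
    ((∀ i : Fin (n + 2), i ≠ Fin.last (n + 1) → A i (Fin.last (n + 1)) = 0) ∧
      A (Fin.last (n + 1)) (Fin.last (n + 1)) = 1 ∧
      (∀ j : Fin (n + 2), j ≠ Fin.last (n + 1) → A (Fin.last (n + 1)) j = 0)) ∧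
    ∃ C : Matrix (Fin (n + 1)) (Fin (n + 1)) R,
      (∀ i j : Fin (n + 1), j < i → C i j = 0) ∧
      ∀ i j : Fin (n + 2), A i j =
        if h : (i : ℕ) < n + 1 ∧ (j : ℕ) < n + 1 then C ⟨i, h.1⟩ ⟨j, h.2⟩
        else if i = j then 1 else 0 := by
  have hk2 : (k : ℕ) ≤ n + 1 := by have := k.isLt; omega
  -- column
  have hAcol : ∀ i : Fin (n + 2), i ≠ Fin.last (n + 1) → A i (Fin.last (n + 1)) = 0 := by
    intro i hi
    have hiv : (i : ℕ) ≤ n := by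
      have := i.isLt
      have : (i : ℕ) ≠ n + 1 := fun h => hi (Fin.ext (by simp [Fin.last, h]))
      omega
    by_cases hik : (i : ℕ) < (k : ℕ)
    · have h0 := hcol ⟨i, by omega⟩ (by simp [Fin.ext_iff]; omega)
      rw [mclone_eval k A _ _ (by simp only [Fin.val_last, Fin.val_mk]; omega) i (Fin.last (n + 1))
        (by simp only [Fin.val_last, Fin.val_mk]; split_ifs <;> omega)
        (by simp only [Fin.val_last, Fin.val_mk]; split_ifs <;> omega)] at h0
      exact h0
    · have h0 := hcol ⟨(i : ℕ) + 1, by omega⟩ (by simp [Fin.ext_iff]; omega)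
      rw [mclone_eval k A _ _ (by simp only [Fin.val_last, Fin.val_mk]; omega) i (Fin.last (n + 1))
        (by simp only [Fin.val_last, Fin.val_mk]; split_ifs <;> omega)
        (by simp only [Fin.val_last, Fin.val_mk]; split_ifs <;> omega)] at h0
      exact h0
  -- diagonal
  have hAdiag : A (Fin.last (n + 1)) (Fin.last (n + 1)) = 1 := by
    rw [mclone_eval k A _ _ (by simp only [Fin.val_last]; omega) (Fin.last (n + 1)) (Fin.last (n + 1))
      (by simp only [Fin.val_last]; split_ifs <;> omega)
      (by simp only [Fin.val_last]; split_ifs <;> omega)] at hdiag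
    exact hdiag
  -- row: from triangularity
  have hArow : ∀ j : Fin (n + 2), j ≠ Fin.last (n + 1) → A (Fin.last (n + 1)) j = 0 := by
    intro j hj
    refine htri _ _ ?_
    have : (j : ℕ) ≠ n + 1 := fun h => hj (Fin.ext (by simp [Fin.last, h]))
    have := j.isLt
    simp [Fin.lt_def, Fin.last]; omega
  refine ⟨⟨hAcol, hAdiag, hArow⟩, fun i j => A i.castSucc j.castSucc, fun i j hij => htri _ _ (by simpa using hij), ?_⟩
  intro i j
  by_cases h : (i : ℕ) < n + 1 ∧ (j : ℕ) < n + 1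
  · rw [dif_pos h]
    congr 1 <;> apply Fin.ext <;> simp
  · rw [dif_neg h]
    by_cases hij : i = j
    · subst hij
      have : i = Fin.last (n + 1) := Fin.ext (by have := i.isLt; simp [Fin.last]; omega)
      rw [if_pos rfl, this, hAdiag]
    · rw [if_neg hij]
      rcases not_and_or.mp h with h' | h'
      · have hi : i = Fin.last (n + 1) := Fin.ext (by have := i.isLt; simp [Fin.last]; omega)
        exact hi ▸ hArow j (fun hj => hij (hi.trans hj.symm))
      · have hj : j = Fin.last (n + 1) := Fin.ext (by have := j.isLt; simp [Fin.last]; omega)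
        exact hj ▸ hAcol i (fun hi => hij (hi.trans hj.symm))
end

section
/- Let R be a ring, let f : {1,…,n} → {1,…,m} be a weakly increasing surjection, and let A be an upper triangular n×n matrix over R all of whose diagonal entries are units. Then there exists an upper triangular m×m matrix C over R with unit diagonal entries such that the matrix B := A·κ_f(C) satisfies (B − I_n)_{p,q} = 0 whenever both p and q are f-stable (in particular B_{p,p} = 1 for every f-stable p and B_{p,q} = 0 for p ≠ q both f-stable). Moreover C can be chosen so that for every index i with A_{i,j} = 0 for all j ≠ i, also B_{i,j} = 0 for all j ≠ i. -/
/-!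
Let `σ k` be the largest element of the fiber `f⁻¹(k)`; the `f`-stable indices are exactly the
`σ k`, and `σ` is strictly monotone, so `T := A.submatrix σ σ` is upper triangular with unit
diagonal and has an upper triangular right inverse `C`. In a stable column `q` of `κ_f(C)` the
only nonzero entries sit in stable rows `σ k`, where they equal `C k (f q)`: any other entry is
either excluded by the definition of `κ_f` or lies below the diagonal of `C`. Hence
on stable rows and columns `A · κ_f(C)` restricts to `T · C = 1`. If row `i` of `A` is zero off
the diagonal, then so is the corresponding row of `T`, and `T · C = 1` forces the same for `C`.
-/

/-- The cloning map `κ_f` associated to a weakly increasing surjection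
`f : {1,…,n} → {1,…,m}`: the entry `(κ_f C)_{p,q}` is `C_{f(p), f(q)}` if `p = q`,
or if `f(p) < f(q)` and `p` is the largest element of its fiber (`f`-stable), or if
`f(p) > f(q)` and `p` is the smallest element of its fiber; all other entries are `0`. -/
def hcloneMat {R : Type*} [Zero R] {n m : ℕ} (f : Fin n → Fin m)
    (C : Matrix (Fin m) (Fin m) R) : Matrix (Fin n) (Fin n) R :=
  Matrix.of fun p q =>
    if p = q ∨ (f p < f q ∧ ∀ r, f r = f p → r ≤ p) ∨
        (f q < f p ∧ ∀ r, f r = f p → p ≤ r) then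
      C (f p) (f q)
    else 0

open Finset Function Matrix

namespace Matrix

section Triangular

variable {ι R : Type*} [Fintype ι]

theorem mul_apply_of_forall_ne_eq_zero [NonUnitalNonAssocSemiring R] {A B : Matrix ι ι R} {i : ι}
    (hrow : ∀ j ≠ i, A i j = 0) (j : ι) : (A * B) i j = A i i * B i j := by
  rw [mul_apply, sum_eq_single i (fun l _ hl => by rw [hrow l hl, zero_mul]) (by simp)]

theorem apply_eq_zero_of_mul_eq_one [Semiring R] [DecidableEq ι] {T C : Matrix ι ι R}
    (hTC : T * C = 1) {i : ι} (hu : IsUnit (T i i)) (hrow : ∀ j ≠ i, T i j = 0) {j : ι}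
    (hj : j ≠ i) : C i j = 0 := by
  rw [← hu.mul_right_eq_zero, ← mul_apply_of_forall_ne_eq_zero hrow, hTC, one_apply_ne hj.symm]

theorem IsUpperTriangular.mul_apply_self [LinearOrder ι] [NonUnitalNonAssocSemiring R]
    {T C : Matrix ι ι R} (hT : T.IsUpperTriangular) (hC : C.IsUpperTriangular) (i : ι) :
    (T * C) i i = T i i * C i i := by
  refine (mul_apply).trans (sum_eq_single i (fun l _ hl => ?_) (by simp))
  rcases hl.lt_or_gt with h | h
  · rw [hT h, zero_mul]
  · rw [hC h, mul_zero]

theorem IsUpperTriangular.isUnit_apply_self_of_mul_eq_one [LinearOrder ι] [Semiring R]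
    [DecidableEq ι] {T C : Matrix ι ι R} (hT : T.IsUpperTriangular) (hC : C.IsUpperTriangular)
    (hTC : T * C = 1) {i : ι} (hu : IsUnit (T i i)) : IsUnit (C i i) := by
  have h : T i i * C i i = 1 := by rw [← hT.mul_apply_self hC, hTC, one_apply_eq]
  rw [← hu.unit.inv_eq_of_mul_eq_one_right h]
  exact hu.unit⁻¹.isUnit

end Triangular

variable {R : Type*} {m : ℕ}

theorem pow_apply_eq_zero_of_strictlyUpperTriangular [Semiring R] {N : Matrix (Fin m) (Fin m) R}
    (hN : ∀ i j, j ≤ i → N i j = 0) (k : ℕ) {i j : Fin m} (hij : (j : ℕ) < i + k) :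
    (N ^ k) i j = 0 := by
  induction k generalizing i with
  | zero => exact one_apply_ne (by omega)
  | succ k ih =>
    rw [pow_succ', mul_apply]
    refine sum_eq_zero fun r _ => ?_
    rcases le_or_gt r i with hri | hir
    · rw [hN i r hri, zero_mul]
    · rw [ih (by omega), mul_zero]

theorem pow_eq_zero_of_strictlyUpperTriangular [Semiring R] {N : Matrix (Fin m) (Fin m) R}
    (hN : ∀ i j, j ≤ i → N i j = 0) : N ^ m = 0 := by
  ext i j
  exact pow_apply_eq_zero_of_strictlyUpperTriangular hN m (by omega)

theorem IsUpperTriangular.exists_mul_eq_one [Ring R] {T : Matrix (Fin m) (Fin m) R}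
    (hT : T.IsUpperTriangular) (hunit : ∀ i, IsUnit (T i i)) :
    ∃ C : Matrix (Fin m) (Fin m) R, C.IsUpperTriangular ∧ T * C = 1 := by
  -- `T * D = 1 - N` with `N` strictly upper triangular, hence nilpotent: invert by a geometric sum.
  set D : Matrix (Fin m) (Fin m) R := diagonal fun i => Ring.inverse (T i i)
  set N := 1 - T * D
  have hTD : (T * D).IsUpperTriangular := hT.mul (blockTriangular_diagonal _)
  have hN : ∀ i j, j ≤ i → N i j = 0 := by
    intro i j hji
    rcases hji.lt_or_eq with hlt | rfl
    · simp only [N, sub_apply, one_apply_ne hlt.ne', hTD hlt, sub_zero]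
    · simp only [N, D, sub_apply, one_apply_eq, mul_diagonal, Ring.mul_inverse_cancel _ (hunit j),
        sub_self]
  refine ⟨D * ∑ k ∈ range m, N ^ k, (blockTriangular_diagonal _).mul ?_, ?_⟩
  · exact sum_mem (S := blockTriangularSubsemiring R id) fun k _ =>
      BlockTriangular.pow (fun i j h => hN i j h.le) k
  · rw [← mul_assoc, show T * D = 1 - N by simp [N], mul_neg_geom_sum,
      pow_eq_zero_of_strictlyUpperTriangular hN, sub_zero]

end Matrix

section Fibers

variable {α β : Type*} [LinearOrder α] {f : α → β} {σ : β → α}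

theorem exists_isGreatest_fiber [Fintype α] (hf : Surjective f) :
    ∃ σ : β → α, ∀ b, IsGreatest (f ⁻¹' {b}) (σ b) := by
  classical
  have hne : ∀ b, (univ.filter (f · = b)).Nonempty := fun b =>
    let ⟨a, ha⟩ := hf b; ⟨a, by simp [ha]⟩
  exact ⟨fun b => (univ.filter (f · = b)).max' (hne b), fun b => by
    simpa [Set.preimage, Set.mem_singleton_iff] using isGreatest_max' _ (hne b)⟩

theorem leftInverse_of_isGreatest_fiber (hσ : ∀ b, IsGreatest (f ⁻¹' {b}) (σ b)) :
    LeftInverse f σ :=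
  fun b => (hσ b).1

theorem eq_of_isGreatest_fiber (hσ : ∀ b, IsGreatest (f ⁻¹' {b}) (σ b)) {a : α}
    (ha : ∀ r, f r = f a → r ≤ a) : σ (f a) = a :=
  (hσ (f a)).unique ⟨rfl, fun r hr => ha r hr⟩

theorem strictMono_of_isGreatest_fiber [LinearOrder β] (hf : Monotone f)
    (hσ : ∀ b, IsGreatest (f ⁻¹' {b}) (σ b)) : StrictMono σ := fun b c hbc =>
  lt_of_not_ge fun h => hbc.not_ge (by
    simpa only [leftInverse_of_isGreatest_fiber hσ _] using hf h)

end Fibers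

section Clone

variable {R : Type*} {n m : ℕ} {f : Fin n → Fin m} {σ : Fin m → Fin n}
  {C : Matrix (Fin m) (Fin m) R}

theorem hcloneMat_apply_of_isGreatest_fiber [Zero R] (hσ : ∀ k, IsGreatest (f ⁻¹' {k}) (σ k))
    (hC : C.IsUpperTriangular) (k : Fin m) {q : Fin n} (hq : ∀ r, f r = f q → r ≤ q) :
    hcloneMat f C (σ k) q = C k (f q) := by
  have hfσ := leftInverse_of_isGreatest_fiber hσ
  rw [hcloneMat, of_apply, hfσ k, ite_eq_left_iff]
  intro hne
  rcases lt_trichotomy k (f q) with hlt | rfl | hgt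
  · exact absurd (Or.inr (Or.inl ⟨hlt, fun r hr => (hσ k).2 hr⟩)) hne
  · exact absurd (Or.inl (eq_of_isGreatest_fiber hσ hq)) hne
  · exact (hC hgt).symm

theorem hcloneMat_apply_eq_zero [Zero R] (hσ : ∀ k, IsGreatest (f ⁻¹' {k}) (σ k))
    (hC : C.IsUpperTriangular) {r q : Fin n} (hr : σ (f r) ≠ r)
    (hq : ∀ s, f s = f q → s ≤ q) : hcloneMat f C r q = 0 := by
  rw [hcloneMat, of_apply, ite_eq_right_iff]
  rintro (rfl | ⟨-, hr'⟩ | ⟨hlt, -⟩)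
  · exact absurd (eq_of_isGreatest_fiber hσ hq) hr
  · exact absurd (eq_of_isGreatest_fiber hσ hr') hr
  · exact hC hlt

theorem mul_hcloneMat_apply [NonUnitalNonAssocSemiring R]
    (hσ : ∀ k, IsGreatest (f ⁻¹' {k}) (σ k)) (hC : C.IsUpperTriangular)
    (A : Matrix (Fin n) (Fin n) R) (p : Fin n) {q : Fin n} (hq : ∀ r, f r = f q → r ≤ q) :
    (A * hcloneMat f C) p q = (A.submatrix id σ * C) p (f q) := by
  refine (Fintype.sum_of_injective σ (leftInverse_of_isGreatest_fiber hσ).injective _ _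
    (fun r hr => ?_) (fun k => ?_)).symm
  · beta_reduce
    rw [hcloneMat_apply_eq_zero hσ hC (fun h => hr ⟨_, h⟩) hq, mul_zero]
  · beta_reduce
    rw [hcloneMat_apply_of_isGreatest_fiber hσ hC k hq, submatrix_apply, id]

theorem submatrix_mul_hcloneMat_sub_one [Ring R] (hσ : ∀ k, IsGreatest (f ⁻¹' {k}) (σ k))
    (hC : C.IsUpperTriangular) (A : Matrix (Fin n) (Fin n) R) :
    (A * hcloneMat f C - 1).submatrix σ σ = A.submatrix σ σ * C - 1 := by
  have hfσ := leftInverse_of_isGreatest_fiber hσ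
  ext k l
  rw [submatrix_apply, Matrix.sub_apply, Matrix.sub_apply,
    mul_hcloneMat_apply hσ hC A _ fun r hr => (hσ l).2 (hr.trans (hfσ l)), hfσ l]
  simp only [one_apply, hfσ.injective.eq_iff]
  rfl

theorem mul_hcloneMat_apply_eq_zero_of_row [Semiring R]
    (hσ : ∀ k, IsGreatest (f ⁻¹' {k}) (σ k)) (hC : C.IsUpperTriangular)
    {A : Matrix (Fin n) (Fin n) R} (hAC : A.submatrix σ σ * C = 1) {i : Fin n}
    (hunit : IsUnit (A i i)) (hrow : ∀ j ≠ i, A i j = 0) {j : Fin n} (hj : j ≠ i) :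
    (A * hcloneMat f C) i j = 0 := by
  have hfσ := leftInverse_of_isGreatest_fiber hσ
  rw [mul_apply_of_forall_ne_eq_zero hrow, hcloneMat, of_apply, ite_eq_right_iff.mpr, mul_zero]
  rintro (rfl | ⟨hlt, hi⟩ | ⟨hlt, -⟩)
  · exact absurd rfl hj
  · have hσi := eq_of_isGreatest_fiber hσ hi
    refine apply_eq_zero_of_mul_eq_one hAC (by rwa [submatrix_apply, hσi]) (fun l hl => ?_) hlt.ne'
    rw [submatrix_apply, hσi]
    exact hrow _ fun h => hl (by rw [← h, hfσ])
  · exact hC hlt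

end Clone

/-- given a weakly increasing surjection `f : {1,…,n} → {1,…,m}` and an
upper triangular `A ∈ B_n(R)`, there is an upper triangular `C ∈ B_m(R)` (unit diagonal)
such that `B = A · κ_f(C)` satisfies `(B - I)_{p,q} = 0` whenever `p` and `q` are both
`f`-stable; moreover `C` can be chosen preserving off-diagonal rows of zeroes of `A`. -/
theorem borel_reduction {R : Type*} [Ring R] {n m : ℕ} (f : Fin n → Fin m)
    (hmono : Monotone f) (hsurj : Function.Surjective f)
    (A : Matrix (Fin n) (Fin n) R)
    (htri : ∀ i j : Fin n, j < i → A i j = 0)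
    (hunit : ∀ i : Fin n, IsUnit (A i i)) :
    ∃ C : Matrix (Fin m) (Fin m) R,
      (∀ i j : Fin m, j < i → C i j = 0) ∧ (∀ i : Fin m, IsUnit (C i i)) ∧
      (∀ p q : Fin n, (∀ r, f r = f p → r ≤ p) → (∀ r, f r = f q → r ≤ q) →
        (A * hcloneMat f C - 1) p q = 0) ∧
      (∀ i : Fin n, (∀ j, j ≠ i → A i j = 0) →
        ∀ j, j ≠ i → (A * hcloneMat f C) i j = 0) := by
  obtain ⟨σ, hσ⟩ := exists_isGreatest_fiber hsurj
  have hT : (A.submatrix σ σ).IsUpperTriangular := fun k l hlk =>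
    htri _ _ (strictMono_of_isGreatest_fiber hmono hσ hlk)
  obtain ⟨C, hC, hTC⟩ := hT.exists_mul_eq_one fun k => hunit (σ k)
  refine ⟨C, fun i j hji => hC hji, fun k => hT.isUnit_apply_self_of_mul_eq_one hC hTC (hunit _),
    fun p q hp hq => ?_,
    fun i hrow j hj => mul_hcloneMat_apply_eq_zero_of_row hσ hC hTC (hunit i) hrow hj⟩
  rw [← eq_of_isGreatest_fiber hσ hp, ← eq_of_isGreatest_fiber hσ hq]
  change (A * hcloneMat f C - 1).submatrix σ σ (f p) (f q) = 0
  rw [submatrix_mul_hcloneMat_sub_one hσ hC, hTC, sub_self, Matrix.zero_apply]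
end

section
/- For positive integers and with composition convention (g∘h)(m) = g(h(m)), the interval-reversal permutations satisfy: (a) r_{i,j} ∘ r_{i,j} = id for all i < j; (b) r_{i,j} ∘ r_{k,ℓ} = r_{k,ℓ} ∘ r_{i,j} whenever i < j < k < ℓ; (c) r_{k,ℓ} ∘ r_{i,j} = r_{k+ℓ−j, k+ℓ−i} ∘ r_{k,ℓ} whenever k ≤ i < j ≤ ℓ. Consequently the assignment s_{i,j} ↦ r_{i,j} extends to a group homomorphism from the mock symmetric group — the group presented by generators s_{i,j} (1 ≤ i < j) with relations s_{i,j}² = 1, s_{i,j}s_{k,ℓ} = s_{k,ℓ}s_{i,j} for i < j < k < ℓ, and s_{k,ℓ}s_{i,j} = s_{k+ℓ−j,k+ℓ−i}s_{k,ℓ} for k ≤ i < j ≤ ℓ — to the group of permutations of the positive integers. -/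
/-- The interval reversal `r_{i,j}` of the positive integers: `m ↦ i + j − m` for
`i ≤ m ≤ j`, identity otherwise. -/
def rrev (i j : ℕ+) : ℕ+ → ℕ+ := fun m =>
  if i ≤ m ∧ m ≤ j then i + j - m else m

/-- Generators `s_{i,j}` (for `1 ≤ i < j`) of the mock symmetric group. -/
abbrev MockGen := {p : ℕ+ × ℕ+ // p.1 < p.2}

/-- The defining relators of the mock symmetric group: `s_{i,j}² = 1`,
`s_{i,j} s_{k,ℓ} = s_{k,ℓ} s_{i,j}` for `i < j < k < ℓ`, and
`s_{k,ℓ} s_{i,j} = s_{k+ℓ−j, k+ℓ−i} s_{k,ℓ}` for `k ≤ i < j ≤ ℓ`. -/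
def mockRels : Set (FreeGroup MockGen) :=
  {w | (∃ a : MockGen, w = FreeGroup.of a * FreeGroup.of a) ∨
    (∃ a b : MockGen, a.val.2 < b.val.1 ∧
      w = FreeGroup.of a * FreeGroup.of b * (FreeGroup.of b * FreeGroup.of a)⁻¹) ∨
    (∃ a b c : MockGen, a.val.1 ≤ b.val.1 ∧ b.val.2 ≤ a.val.2 ∧
      c.val.1 = a.val.1 + a.val.2 - b.val.2 ∧
      c.val.2 = a.val.1 + a.val.2 - b.val.1 ∧
      w = FreeGroup.of a * FreeGroup.of b * (FreeGroup.of c * FreeGroup.of a)⁻¹)}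

/-- The mock symmetric group (on infinitely many strands), as a presented group. -/
abbrev MockSym := PresentedGroup mockRels

lemma rrev_coe (i j m : ℕ+) :
    ((rrev i j m : ℕ+) : ℕ) = if (i:ℕ) ≤ m ∧ (m:ℕ) ≤ j then (i:ℕ) + j - m else m := by
  have hi := i.pos
  unfold rrev
  split_ifs with h h' h'
  · rw [PNat.sub_coe]
    rw [if_pos]
    · simp [PNat.add_coe]
    · rw [← PNat.coe_lt_coe, PNat.add_coe]
      omega
  · exact absurd ⟨(PNat.coe_le_coe _ _).mpr h.1, (PNat.coe_le_coe _ _).mpr h.2⟩ h'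
  · exact absurd ⟨(PNat.coe_le_coe _ _).mp h'.1, (PNat.coe_le_coe _ _).mp h'.2⟩ h
  · rfl

lemma rrev_part1 : ∀ i j : ℕ+, i ≤ j → rrev i j ∘ rrev i j = id := by
  intro i j hij
  funext m
  apply PNat.coe_injective
  have hi := i.pos; have hm := m.pos
  simp only [Function.comp_apply, rrev_coe, id_eq]
  split_ifs <;> omega

lemma rrev_involutive (i j : ℕ+) (h : i ≤ j) : Function.Involutive (rrev i j) := by
  intro m
  have := congrFun (rrev_part1 i j h) m
  simpa using this

lemma rrev_part2 : ∀ i j k l : ℕ+, i < j → j < k → k < l →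
    rrev i j ∘ rrev k l = rrev k l ∘ rrev i j := by
  intro i j k l h1 h2 h3
  rw [← PNat.coe_lt_coe] at h1 h2 h3
  funext m
  apply PNat.coe_injective
  have hi := i.pos; have hm := m.pos
  simp only [Function.comp_apply, rrev_coe]
  split_ifs <;> omega

lemma rrev_part3 : ∀ k i j l : ℕ+, k ≤ i → i < j → j ≤ l →
    rrev k l ∘ rrev i j = rrev (k + l - j) (k + l - i) ∘ rrev k l := by
  intro k i j l h1 h2 h3
  rw [← PNat.coe_le_coe] at h1 h3
  rw [← PNat.coe_lt_coe] at h2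
  have hk := k.pos; have hi := i.pos
  have hs1 : ((k + l - j : ℕ+) : ℕ) = (k:ℕ) + l - j := by
    rw [PNat.sub_coe, if_pos]
    · simp [PNat.add_coe]
    · rw [← PNat.coe_lt_coe, PNat.add_coe]; omega
  have hs2 : ((k + l - i : ℕ+) : ℕ) = (k:ℕ) + l - i := by
    rw [PNat.sub_coe, if_pos]
    · simp [PNat.add_coe]
    · rw [← PNat.coe_lt_coe, PNat.add_coe]; omega
  funext m
  apply PNat.coe_injective
  have hm := m.pos
  simp only [Function.comp_apply, rrev_coe, hs1, hs2]
  split_ifs <;> omega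

/-- the interval reversals satisfy the defining relations of the mock
symmetric group, and consequently `s_{i,j} ↦ r_{i,j}` extends to a group homomorphism
from the mock symmetric group to the group of permutations of the positive integers. -/
theorem mock_relations_and_hom :
    (∀ i j : ℕ+, i < j → rrev i j ∘ rrev i j = id) ∧
    (∀ i j k l : ℕ+, i < j → j < k → k < l →
      rrev i j ∘ rrev k l = rrev k l ∘ rrev i j) ∧
    (∀ k i j l : ℕ+, k ≤ i → i < j → j ≤ l →
      rrev k l ∘ rrev i j = rrev (k + l - j) (k + l - i) ∘ rrev k l) ∧
    (∃ φ : MockSym →* Equiv.Perm ℕ+,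
      ∀ a : MockGen, ∀ m : ℕ+,
        (φ (PresentedGroup.of a)) m = rrev a.val.1 a.val.2 m) := by
  refine ⟨fun i j h => rrev_part1 i j h.le, rrev_part2, rrev_part3, ?_⟩
  set f : MockGen → Equiv.Perm ℕ+ :=
    fun a => (rrev_involutive a.val.1 a.val.2 a.prop.le).toPerm with hf
  have key : ∀ r ∈ mockRels, (FreeGroup.lift f) r = 1 := by
    intro r hr
    rcases hr with ⟨a, rfl⟩ | ⟨a, b, hab, rfl⟩ | ⟨a, b, c, h1, h2, h3, h4, rfl⟩
    · simp only [map_mul, FreeGroup.lift_apply_of]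
      ext m
      have := congrFun (rrev_part1 a.val.1 a.val.2 a.prop.le) m
      simpa [hf, Equiv.Perm.mul_apply, Function.Involutive.toPerm] using this
    · simp only [map_mul, map_inv, FreeGroup.lift_apply_of]
      rw [mul_inv_eq_one]
      ext m
      have := congrFun (rrev_part2 a.val.1 a.val.2 b.val.1 b.val.2 a.prop hab b.prop) m
      simpa [hf, Equiv.Perm.mul_apply, Function.Involutive.toPerm] using this
    · simp only [map_mul, map_inv, FreeGroup.lift_apply_of]
      rw [mul_inv_eq_one]
      ext m
      have := congrFun (rrev_part3 a.val.1 b.val.1 b.val.2 a.val.2 h1 b.prop h2) m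
      rw [← h3, ← h4] at this
      simpa [hf, Equiv.Perm.mul_apply, Function.Involutive.toPerm] using this
  refine ⟨PresentedGroup.toGroup key, fun a m => ?_⟩
  rw [PresentedGroup.toGroup.of]
  simp [hf, Function.Involutive.toPerm]
end

section
/- Let G be a group, 𝓕 the forest monoid, and suppose maps G × 𝓕 → 𝓕, (g,E) ↦ g·E, and G × 𝓕 → G, (g,E) ↦ g^E, form a Zappa–Szép action pair (satisfying the eight axioms below). Then the action of G on 𝓕 preserves the set of generators: for every g ∈ G and every k ≥ 1 there exists ℓ ≥ 1 with g·λ_k = λ_ℓ. -/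
/-!
Since `G` is a group, each `E ↦ g·E` is a bijection of `𝓕` fixing `1`, with inverse
`E ↦ g⁻¹·E`. The twisted multiplicativity `g·(EF) = (g·E)((g^E)·F)` then shows that `g·E`
factors nontrivially only if `E` does. The generators `λ_k` are exactly the irreducible
elements of `𝓕` (its relations are length-preserving, so `𝓕` is graded by word length), hence
they are permuted by the action.
-/

section ZappaSzep

variable {G M : Type*} [Group G] {act : G → M → M}

theorem act_inv_act (h_one : ∀ E, act 1 E = E)
    (h_mul : ∀ g h : G, ∀ E, act (g * h) E = act g (act h E)) (g : G) (E : M) :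
    act g⁻¹ (act g E) = E := by
  rw [← h_mul, inv_mul_cancel, h_one]

theorem act_eq_one_iff [Monoid M] (h_one : ∀ E, act 1 E = E)
    (h_mul : ∀ g h : G, ∀ E, act (g * h) E = act g (act h E)) (h_act_one : ∀ g : G, act g 1 = 1)
    {g : G} {E : M} : act g E = 1 ↔ E = 1 := by
  refine ⟨fun h => ?_, fun h => h ▸ h_act_one g⟩
  rw [← act_inv_act h_one h_mul g E, h, h_act_one]

theorem Irreducible.zappaSzep_act [Monoid M] [Subsingleton Mˣ] {pw : G → M → G}
    (h_one : ∀ E, act 1 E = E)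
    (h_mul : ∀ g h : G, ∀ E, act (g * h) E = act g (act h E)) (h_act_one : ∀ g : G, act g 1 = 1)
    (h_act_mul : ∀ g : G, ∀ E F, act g (E * F) = act g E * act (pw g E) F)
    {E : M} (hE : Irreducible E) (g : G) : Irreducible (act g E) := by
  simp only [irreducible_iff, isUnit_iff_eq_one] at hE ⊢
  refine ⟨fun h => hE.1 ((act_eq_one_iff h_one h_mul h_act_one).1 h), fun A B hAB => ?_⟩
  have hE_split : E = act g⁻¹ A * act (pw g⁻¹ A) B := by
    rw [← h_act_mul, ← hAB, act_inv_act h_one h_mul]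
  simpa only [act_eq_one_iff h_one h_mul h_act_one] using hE.2 hE_split

end ZappaSzep

namespace ForestMonoid

def length : ForestMonoid →* Multiplicative ℕ :=
  ForestCon.lift
    { toFun := fun w => .ofAdd w.length
      map_one' := rfl
      map_mul' := fun v w => by simp only [FreeMonoid.length_mul, ofAdd_add] }
    (Con.conGen_le.2 fun _ _ ⟨_, _, _, hv, hw⟩ => by subst hv hw; rfl)

theorem length_eq_one_iff {E : ForestMonoid} : length E = 1 ↔ E = 1 := by
  refine ⟨fun h => ?_, fun h => h ▸ map_one length⟩
  obtain ⟨w, rfl⟩ := ForestCon.mk'_surjective E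
  rw [FreeMonoid.length_eq_zero.1 (ofAdd_eq_one.1 h), map_one]

instance : Subsingleton ForestMonoidˣ :=
  Subsingleton.units_of_isUnit fun _ hE => length_eq_one_iff.1 (hE.map length).eq_one

theorem irreducible_lam (k : ℕ+) : Irreducible (lam k) := by
  have hk : (length (lam k)).toAdd = 1 := rfl
  simp only [irreducible_iff, isUnit_iff_eq_one]
  refine ⟨fun h => by simp [h] at hk, fun A B h => ?_⟩
  rw [h, map_mul, toAdd_mul, Nat.add_eq_one_iff] at hk
  simp only [← length_eq_one_iff]
  rcases hk with ⟨hA, -⟩ | ⟨-, hB⟩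
  exacts [.inl hA, .inr hB]

theorem exists_eq_lam_of_irreducible {E : ForestMonoid} (hE : Irreducible E) :
    ∃ l, E = lam l := by
  obtain ⟨w, rfl⟩ := ForestCon.mk'_surjective E
  cases w using FreeMonoid.casesOn with
  | one => exact absurd isUnit_one (map_one ForestCon.mk' ▸ hE.not_isUnit)
  | of_mul l w =>
    rw [map_mul] at hE ⊢
    refine ⟨l, ?_⟩
    rcases hE.isUnit_or_isUnit rfl with hl | hw
    · exact absurd hl (irreducible_lam l).not_isUnit
    · rw [hw.eq_one, mul_one]; rfl

end ForestMonoid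

theorem zappaSzep_action_preserves_generators_general {G : Type*} [Group G]
    (act : G → ForestMonoid → ForestMonoid) (pw : G → ForestMonoid → G)
    (h1 : ∀ E, act 1 E = E)
    (h2 : ∀ g h : G, ∀ E, act (g * h) E = act g (act h E))
    (h7 : ∀ g : G, act g 1 = 1)
    (h8 : ∀ g : G, ∀ E F, act g (E * F) = act g E * act (pw g E) F) :
    ∀ (g : G) (k : ℕ+), ∃ l : ℕ+, act g (lam k) = lam l := fun g k =>
  ForestMonoid.exists_eq_lam_of_irreducible <|
    (ForestMonoid.irreducible_lam k).zappaSzep_act h1 h2 h7 h8 g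

/-- given a Zappa–Szép action pair of a group `G` and the forest monoid
`𝓕` (with `act g E = g·E` and `pw g E = g^E`), the action of `G` on `𝓕` preserves the
set of generators `λ_k`. -/
theorem zappaSzep_action_preserves_generators {G : Type*} [Group G]
    (act : G → ForestMonoid → ForestMonoid) (pw : G → ForestMonoid → G)
    (h1 : ∀ E, act 1 E = E)
    (h2 : ∀ g h : G, ∀ E, act (g * h) E = act g (act h E))
    (h3 : ∀ g : G, pw g 1 = g)
    (h4 : ∀ g : G, ∀ E F, pw g (E * F) = pw (pw g E) F)
    (h5 : ∀ E, pw (1 : G) E = 1)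
    (h6 : ∀ g h : G, ∀ E, pw (g * h) E = pw g (act h E) * pw h E)
    (h7 : ∀ g : G, act g 1 = 1)
    (h8 : ∀ g : G, ∀ E F, act g (E * F) = act g E * act (pw g E) F) :
    ∀ (g : G) (k : ℕ+), ∃ l : ℕ+, act g (lam k) = lam l :=
  zappaSzep_action_preserves_generators_general act pw h1 h2 h7 h8
end
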